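/- Let A be an n×n symmetric matrix with eigendecomposition A = P Λ P^T, where α, β, γ index its positive, zero, and negative eigenvalues. Define Σ_{ij} = (max{λ_i,0} − max{λ_j,0})/(λ_i − λ_j) for λ_i ≠ λ_j and Σ_{ij} = 1 otherwise. Then for every symmetric H, the function H ↦ P [ H̃_{αα}, H̃_{αβ}, Σ_{αγ}∘H̃_{αγ}; H̃_{αβ}^T, Π_{S^{|β|}_+}(H̃_{ββ}), 0; Σ_{αγ}^T∘H̃_{αγ}^T, 0, 0 ] P^T with H̃ = P^T H P is positively homogeneous of degree 1 and globally Lipschitz in H. -/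

import Mathlib

/-!
Conjugation by the orthogonal matrix `P` preserves the Frobenius norm, so everything reduces to
the block map `H̃ ↦ [H̃_αα, H̃_αβ, Σ∘H̃_αγ; …]`. Off the `β × β` block its entries are `H̃ᵢⱼ`,
`Σᵢⱼ H̃ᵢⱼ` with `|Σᵢⱼ| ≤ 1` (because `max · 0` is 1-Lipschitz), or `0`, hence dominated entrywise;
on the `β × β` block it is the metric projection onto the closed convex PSD cone, which is
nonexpansive by the variational inequality. Because that set is a cone, the projection is also
positively homogeneous, and so is the whole map.
-/

open scoped BigOperators
open Matrix

/-- Frobenius inner product (general index types, rectangular). -/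
noncomputable def finner {m m' : Type*} [Fintype m] [Fintype m']
    (X Y : Matrix m m' ℝ) : ℝ :=
  ∑ i, ∑ j, X i j * Y i j

/-- Frobenius norm. -/
noncomputable def fnorm {m m' : Type*} [Fintype m] [Fintype m']
    (X : Matrix m m' ℝ) : ℝ :=
  Real.sqrt (finner X X)

/-- The directional derivative `H ↦ Π'_{S^n_+}(A;H)` of the PSD projection at
`A = PΛPᵀ`, written blockwise with `H̃ = PᵀHP`, `Σ` the matrix of divided
differences, and `projβ` the PSD projection on the `β × β` block. -/
noncomputable def ddProj {n : ℕ} (P : Matrix (Fin n) (Fin n) ℝ)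
    (α β γ : Finset (Fin n)) (Sig : Matrix (Fin n) (Fin n) ℝ)
    (projβ : Matrix ↥β ↥β ℝ → Matrix ↥β ↥β ℝ)
    (H : Matrix (Fin n) (Fin n) ℝ) : Matrix (Fin n) (Fin n) ℝ :=
  P * (Matrix.of fun i j =>
    if (i ∈ α ∧ j ∈ α) ∨ (i ∈ α ∧ j ∈ β) ∨ (i ∈ β ∧ j ∈ α) then (Pᵀ * H * P) i j
    else if (i ∈ α ∧ j ∈ γ) ∨ (i ∈ γ ∧ j ∈ α) then Sig i j * (Pᵀ * H * P) i j
    else if hb : i ∈ β ∧ j ∈ β then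
      projβ (Matrix.of fun (a b : ↥β) => (Pᵀ * H * P) a.1 b.1) ⟨i, hb.1⟩ ⟨j, hb.2⟩
    else 0) * Pᵀ

noncomputable def flattenMatrix {m m' : Type*} [Fintype m] [Fintype m'] :
    Matrix m m' ℝ ≃ₗ[ℝ] EuclideanSpace ℝ (m × m') :=
  (LinearEquiv.curry ℝ ℝ m m').symm.trans (WithLp.linearEquiv 2 ℝ (m × m' → ℝ)).symm

section Frobenius

variable {m m' : Type*} [Fintype m] [Fintype m']

theorem flattenMatrix_apply (X : Matrix m m' ℝ) (p : m × m') :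
    flattenMatrix X p = X p.1 p.2 :=
  rfl

theorem finner_self_nonneg (X : Matrix m m' ℝ) : 0 ≤ finner X X :=
  Finset.sum_nonneg fun _ _ => Finset.sum_nonneg fun _ _ => mul_self_nonneg _

theorem fnorm_eq_norm_flattenMatrix (X : Matrix m m' ℝ) : fnorm X = ‖flattenMatrix X‖ := by
  rw [EuclideanSpace.norm_eq, fnorm, finner, ← Finset.univ_product_univ, Finset.sum_product]
  simp [flattenMatrix_apply, sq]

theorem finner_self_eq_trace (X : Matrix m m' ℝ) : finner X X = trace (Xᵀ * X) := by
  simp only [finner, trace, diag_apply, mul_apply, transpose_apply]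
  exact Finset.sum_comm

theorem fnorm_conj {k : Type*} [Fintype k] [DecidableEq k] {P : Matrix k k ℝ}
    (hP : Pᵀ * P = 1) (X : Matrix k k ℝ) : fnorm (P * X * Pᵀ) = fnorm X := by
  have hconj : (P * X * Pᵀ)ᵀ * (P * X * Pᵀ) = P * (Xᵀ * X) * Pᵀ := by
    simp only [transpose_mul, transpose_transpose, Matrix.mul_assoc]
    rw [← Matrix.mul_assoc Pᵀ P, hP, Matrix.one_mul]
  rw [fnorm, fnorm, finner_self_eq_trace, finner_self_eq_trace, hconj, trace_mul_comm,
    ← Matrix.mul_assoc, hP, Matrix.one_mul]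

end Frobenius

theorem abs_posPart_slope_le_one (a b : ℝ) : |(max a 0 - max b 0) / (a - b)| ≤ 1 := by
  rw [abs_div]
  exact div_le_one_of_le₀ (abs_max_sub_max_le_abs a b 0) (abs_nonneg _)

section MetricProjection

variable {E : Type*} [NormedAddCommGroup E] [InnerProductSpace ℝ E]

def IsMetricProjection (K : Set E) (u v : E) : Prop :=
  v ∈ K ∧ ∀ w ∈ K, ‖u - v‖ ≤ ‖u - w‖

namespace IsMetricProjection

variable {K : Set E} {u u' v v' : E}

theorem inner_sub_nonpos (hK : Convex ℝ K) (h : IsMetricProjection K u v) {w : E}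
    (hw : w ∈ K) : inner ℝ (u - v) (w - v) ≤ 0 := by
  have : Nonempty K := ⟨⟨v, h.1⟩⟩
  refine (norm_eq_iInf_iff_real_inner_le_zero hK h.1).1 (le_antisymm ?_ ?_) w hw
  · exact le_ciInf fun w => h.2 w w.2
  · exact ciInf_le ⟨0, Set.forall_mem_range.2 fun w : K => norm_nonneg (u - w)⟩ ⟨v, h.1⟩

theorem norm_sub_le (hK : Convex ℝ K) (h : IsMetricProjection K u v)
    (h' : IsMetricProjection K u' v') : ‖v - v'‖ ≤ ‖u - u'‖ := by
  have h₁ := h.inner_sub_nonpos hK h'.1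
  have h₂ := h'.inner_sub_nonpos hK h.1
  have hsq : ‖v - v'‖ ^ 2 ≤ inner ℝ (u - u') (v - v') := by
    rw [← real_inner_self_eq_norm_sq]
    rw [← neg_sub v v', inner_neg_right] at h₁
    simp only [inner_sub_left] at h₁ h₂ ⊢
    linarith
  have hcs : inner ℝ (u - u') (v - v') ≤ ‖u - u'‖ * ‖v - v'‖ := real_inner_le_norm _ _
  nlinarith [norm_nonneg (v - v'), norm_nonneg (u - u')]

theorem eq (hK : Convex ℝ K) (h : IsMetricProjection K u v)
    (h' : IsMetricProjection K u v') : v = v' := by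
  simpa [sub_eq_zero] using h.norm_sub_le hK h'

theorem smul (hcone : ∀ c : ℝ, 0 < c → ∀ w ∈ K, c • w ∈ K) (h : IsMetricProjection K u v)
    {c : ℝ} (hc : 0 < c) : IsMetricProjection K (c • u) (c • v) := by
  refine ⟨hcone c hc v h.1, fun w hw => ?_⟩
  have hmin := h.2 (c⁻¹ • w) (hcone _ (inv_pos.2 hc) w hw)
  calc ‖c • u - c • v‖ = c * ‖u - v‖ := by rw [← smul_sub, norm_smul_of_nonneg hc.le]
    _ ≤ c * ‖u - c⁻¹ • w‖ := by gcongr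
    _ = ‖c • u - w‖ := by
      rw [← norm_smul_of_nonneg hc.le, smul_sub, smul_inv_smul₀ hc.ne']

end IsMetricProjection

end MetricProjection

theorem convex_setOf_posSemidef {ι : Type*} : Convex ℝ {W : Matrix ι ι ℝ | W.PosSemidef} :=
  fun _ hW _ hV _ _ ha hb _ => (hW.smul ha).add (hV.smul hb)

section PSDProjection

variable {ι : Type*} [Fintype ι]

theorem convex_flattenMatrix_image_posSemidef :
    Convex ℝ (flattenMatrix '' {W : Matrix ι ι ℝ | W.PosSemidef}) := by
  have := convex_setOf_posSemidef.linear_image (flattenMatrix (m := ι) (m' := ι)).toLinearMap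
  rwa [LinearEquiv.coe_coe] at this

def IsPSDProjection (proj : Matrix ι ι ℝ → Matrix ι ι ℝ) : Prop :=
  ∀ M, (proj M).PosSemidef ∧
    ∀ W : Matrix ι ι ℝ, W.PosSemidef → fnorm (proj M - M) ≤ fnorm (W - M)

namespace IsPSDProjection

variable {proj : Matrix ι ι ℝ → Matrix ι ι ℝ}

theorem isMetricProjection (h : IsPSDProjection proj) (M : Matrix ι ι ℝ) :
    IsMetricProjection (flattenMatrix '' {W | W.PosSemidef}) (flattenMatrix M)
      (flattenMatrix (proj M)) := by
  refine ⟨⟨_, (h M).1, rfl⟩, ?_⟩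
  rintro _ ⟨W, hW, rfl⟩
  rw [norm_sub_rev, norm_sub_rev (flattenMatrix M), ← map_sub, ← map_sub,
    ← fnorm_eq_norm_flattenMatrix, ← fnorm_eq_norm_flattenMatrix]
  exact (h M).2 W hW

theorem fnorm_sub_le (h : IsPSDProjection proj) (M M' : Matrix ι ι ℝ) :
    fnorm (proj M - proj M') ≤ fnorm (M - M') := by
  simpa only [fnorm_eq_norm_flattenMatrix, map_sub]
    using (h.isMetricProjection M).norm_sub_le convex_flattenMatrix_image_posSemidef
      (h.isMetricProjection M')

theorem map_smul (h : IsPSDProjection proj) {c : ℝ} (hc : 0 < c) (M : Matrix ι ι ℝ) :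
    proj (c • M) = c • proj M := by
  have hcone : ∀ c : ℝ, 0 < c → ∀ w ∈ flattenMatrix '' {W : Matrix ι ι ℝ | W.PosSemidef},
      c • w ∈ flattenMatrix '' {W | W.PosSemidef} := by
    rintro c hc _ ⟨W, hW, rfl⟩
    exact ⟨c • W, hW.smul hc.le, _root_.map_smul _ _ _⟩
  apply flattenMatrix.injective
  refine (h.isMetricProjection (c • M)).eq convex_flattenMatrix_image_posSemidef ?_
  rw [_root_.map_smul, _root_.map_smul]
  exact (h.isMetricProjection M).smul hcone hc

end IsPSDProjection

end PSDProjection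

section Submatrix

variable {ι : Type*} [Fintype ι] [DecidableEq ι]

theorem sum_sum_ite_mem_and_mem (β : Finset ι) (f : ι → ι → ℝ) :
    ∑ i, ∑ j, (if i ∈ β ∧ j ∈ β then f i j else 0) = ∑ a : β, ∑ b : β, f a b := by
  simp only [ite_and, Finset.sum_ite_irrel, Finset.sum_const_zero, Finset.sum_ite_mem,
    Finset.univ_inter]
  rw [← Finset.sum_coe_sort β]
  simp only [← Finset.sum_coe_sort β (f _)]

theorem finner_self_eq_submatrix_add (β : Finset ι) (X : Matrix ι ι ℝ) :
    finner X X = finner (X.submatrix (↑) (↑) : Matrix β β ℝ) (X.submatrix (↑) (↑)) +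
      ∑ i, ∑ j, if i ∈ β ∧ j ∈ β then 0 else X i j * X i j := by
  simp only [finner, submatrix_apply]
  rw [← sum_sum_ite_mem_and_mem β fun i j => X i j * X i j, ← Finset.sum_add_distrib]
  refine Finset.sum_congr rfl fun i _ => ?_
  rw [← Finset.sum_add_distrib]
  refine Finset.sum_congr rfl fun j _ => ?_
  split_ifs <;> simp

theorem fnorm_le_fnorm_of_submatrix (β : Finset ι) {X Y : Matrix ι ι ℝ}
    (hβ : fnorm (X.submatrix (↑) (↑) : Matrix β β ℝ) ≤
      fnorm (Y.submatrix (↑) (↑) : Matrix β β ℝ))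
    (hout : ∀ i j, ¬(i ∈ β ∧ j ∈ β) → |X i j| ≤ |Y i j|) : fnorm X ≤ fnorm Y := by
  refine Real.sqrt_le_sqrt ?_
  rw [finner_self_eq_submatrix_add β X, finner_self_eq_submatrix_add β Y]
  refine add_le_add ((Real.sqrt_le_sqrt_iff (finner_self_nonneg _)).1 hβ) ?_
  refine Finset.sum_le_sum fun i _ => Finset.sum_le_sum fun j _ => ?_
  split_ifs with h
  · exact le_rfl
  · rw [← abs_mul_abs_self (X i j), ← abs_mul_abs_self (Y i j)]
    exact mul_self_le_mul_self (abs_nonneg _) (hout i j h)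

end Submatrix

section BlockMap

variable {ι : Type*} [DecidableEq ι] (α β γ : Finset ι) (Sig : Matrix ι ι ℝ)
  (projβ : Matrix β β ℝ → Matrix β β ℝ)

def blockMap (M : Matrix ι ι ℝ) : Matrix ι ι ℝ :=
  Matrix.of fun i j =>
    if (i ∈ α ∧ j ∈ α) ∨ (i ∈ α ∧ j ∈ β) ∨ (i ∈ β ∧ j ∈ α) then M i j
    else if (i ∈ α ∧ j ∈ γ) ∨ (i ∈ γ ∧ j ∈ α) then Sig i j * M i j
    else if hb : i ∈ β ∧ j ∈ β then projβ (M.submatrix (↑) (↑)) ⟨i, hb.1⟩ ⟨j, hb.2⟩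
    else 0

variable {α β γ Sig projβ}

theorem blockMap_smul {c : ℝ} (hproj : ∀ X, projβ (c • X) = c • projβ X) (M : Matrix ι ι ℝ) :
    blockMap α β γ Sig projβ (c • M) = c • blockMap α β γ Sig projβ M := by
  have hsub : ((c • M).submatrix (↑) (↑) : Matrix β β ℝ) = c • M.submatrix (↑) (↑) := rfl
  ext i j
  simp only [blockMap, of_apply, Matrix.smul_apply, hsub, hproj, smul_eq_mul]
  split_ifs <;> ring

theorem blockMap_apply_of_mem (hαβ : Disjoint α β) (hγβ : Disjoint γ β) (M : Matrix ι ι ℝ)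
    {i j : ι} (hi : i ∈ β) (hj : j ∈ β) :
    blockMap α β γ Sig projβ M i j = projβ (M.submatrix (↑) (↑)) ⟨i, hi⟩ ⟨j, hj⟩ := by
  have hiα : i ∉ α := Finset.disjoint_right.1 hαβ hi
  have hjα : j ∉ α := Finset.disjoint_right.1 hαβ hj
  have hiγ : i ∉ γ := Finset.disjoint_right.1 hγβ hi
  simp [blockMap, hi, hj, hiα, hjα, hiγ]

theorem abs_blockMap_sub_apply_le (hSig : ∀ i j, |Sig i j| ≤ 1) (M M' : Matrix ι ι ℝ)
    {i j : ι} (hij : ¬(i ∈ β ∧ j ∈ β)) :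
    |blockMap α β γ Sig projβ M i j - blockMap α β γ Sig projβ M' i j| ≤ |M i j - M' i j| := by
  simp only [blockMap, of_apply, dif_neg hij]
  split_ifs
  · exact le_rfl
  · rw [← mul_sub, abs_mul]
    exact mul_le_of_le_one_left (abs_nonneg _) (hSig i j)
  · simp

theorem fnorm_blockMap_sub_le [Fintype ι] (hαβ : Disjoint α β) (hγβ : Disjoint γ β)
    (hSig : ∀ i j, |Sig i j| ≤ 1) (hproj : IsPSDProjection projβ) (M M' : Matrix ι ι ℝ) :
    fnorm (blockMap α β γ Sig projβ M - blockMap α β γ Sig projβ M') ≤ fnorm (M - M') := by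
  refine fnorm_le_fnorm_of_submatrix β ?_ fun i j hij => ?_
  · have hblock :
        (blockMap α β γ Sig projβ M - blockMap α β γ Sig projβ M').submatrix (↑) (↑) =
          projβ (M.submatrix (↑) (↑)) - projβ (M'.submatrix (↑) (↑)) := by
      ext a b
      simp [blockMap_apply_of_mem hαβ hγβ]
    rw [hblock]
    exact hproj.fnorm_sub_le (M.submatrix (↑) (↑)) (M'.submatrix (↑) (↑))
  · simpa only [Matrix.sub_apply] using abs_blockMap_sub_apply_le hSig M M' hij

end BlockMap

theorem ddProj_eq_blockMap {n : ℕ} (P : Matrix (Fin n) (Fin n) ℝ) (α β γ : Finset (Fin n))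
    (Sig : Matrix (Fin n) (Fin n) ℝ) (projβ : Matrix β β ℝ → Matrix β β ℝ)
    (H : Matrix (Fin n) (Fin n) ℝ) :
    ddProj P α β γ Sig projβ H = P * blockMap α β γ Sig projβ (Pᵀ * H * P) * Pᵀ :=
  rfl

theorem stmt8_general {n : ℕ} (P : Matrix (Fin n) (Fin n) ℝ) (lam : Fin n → ℝ)
    (α β γ : Finset (Fin n)) (Sig : Matrix (Fin n) (Fin n) ℝ)
    (projβ : Matrix ↥β ↥β ℝ → Matrix ↥β ↥β ℝ)
    (hP : Pᵀ * P = 1)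
    (hα : ∀ i, i ∈ α ↔ 0 < lam i)
    (hβ : ∀ i, i ∈ β ↔ lam i = 0)
    (hγ : ∀ i, i ∈ γ ↔ lam i < 0)
    (hSig : ∀ i j, Sig i j =
      if lam i ≠ lam j then (max (lam i) 0 - max (lam j) 0) / (lam i - lam j) else 1)
    (hprojβ : ∀ M : Matrix ↥β ↥β ℝ, (projβ M).PosSemidef ∧
      ∀ W : Matrix ↥β ↥β ℝ, W.PosSemidef → fnorm (projβ M - M) ≤ fnorm (W - M)) :
    (∀ c : ℝ, 0 < c → ∀ H : Matrix (Fin n) (Fin n) ℝ,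
        ddProj P α β γ Sig projβ (c • H) = c • ddProj P α β γ Sig projβ H) ∧
      ∃ L : ℝ, 0 ≤ L ∧ ∀ H₁ H₂ : Matrix (Fin n) (Fin n) ℝ,
        fnorm (ddProj P α β γ Sig projβ H₁ - ddProj P α β γ Sig projβ H₂) ≤
          L * fnorm (H₁ - H₂) := by
  have hproj : IsPSDProjection projβ := hprojβ
  have hαβ : Disjoint α β :=
    Finset.disjoint_left.2 fun i hiα hiβ => ((hα i).1 hiα).ne' ((hβ i).1 hiβ)
  have hγβ : Disjoint γ β :=
    Finset.disjoint_left.2 fun i hiγ hiβ => ((hγ i).1 hiγ).ne ((hβ i).1 hiβ)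
  have hSig_le : ∀ i j, |Sig i j| ≤ 1 := fun i j => by
    rw [hSig]
    split_ifs
    · exact abs_posPart_slope_le_one _ _
    · simp
  have hP' : Pᵀᵀ * Pᵀ = 1 := by rw [transpose_transpose]; exact mul_eq_one_comm.1 hP
  refine ⟨fun c hc H => ?_, 1, zero_le_one, fun H₁ H₂ => ?_⟩
  · simp only [ddProj_eq_blockMap, Matrix.mul_smul, Matrix.smul_mul,
      blockMap_smul (hproj.map_smul hc)]
  · rw [ddProj_eq_blockMap, ddProj_eq_blockMap, one_mul, ← Matrix.sub_mul, ← Matrix.mul_sub,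
      fnorm_conj hP, ← fnorm_conj hP' (H₁ - H₂), transpose_transpose, Matrix.mul_sub,
      Matrix.sub_mul]
    exact fnorm_blockMap_sub_le hαβ hγβ hSig_le hproj _ _

/-- the directional derivative `H ↦ Π'_{S^n_+}(A;H)` is positively
homogeneous of degree 1 and globally Lipschitz in `H`. -/
theorem stmt8 {n : ℕ} (A P : Matrix (Fin n) (Fin n) ℝ) (lam : Fin n → ℝ)
    (α β γ : Finset (Fin n)) (Sig : Matrix (Fin n) (Fin n) ℝ)
    (projβ : Matrix ↥β ↥β ℝ → Matrix ↥β ↥β ℝ)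
    (hP : Pᵀ * P = 1)
    (hdecomp : A = P * Matrix.diagonal lam * Pᵀ)
    (hmono : Antitone lam)
    (hα : ∀ i, i ∈ α ↔ 0 < lam i)
    (hβ : ∀ i, i ∈ β ↔ lam i = 0)
    (hγ : ∀ i, i ∈ γ ↔ lam i < 0)
    (hSig : ∀ i j, Sig i j =
      if lam i ≠ lam j then (max (lam i) 0 - max (lam j) 0) / (lam i - lam j) else 1)
    (hprojβ : ∀ M : Matrix ↥β ↥β ℝ, (projβ M).PosSemidef ∧
      ∀ W : Matrix ↥β ↥β ℝ, W.PosSemidef → fnorm (projβ M - M) ≤ fnorm (W - M)) :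
    (∀ c : ℝ, 0 < c → ∀ H : Matrix (Fin n) (Fin n) ℝ,
        ddProj P α β γ Sig projβ (c • H) = c • ddProj P α β γ Sig projβ H) ∧
      ∃ L : ℝ, 0 ≤ L ∧ ∀ H₁ H₂ : Matrix (Fin n) (Fin n) ℝ,
        fnorm (ddProj P α β γ Sig projβ H₁ - ddProj P α β γ Sig projβ H₂) ≤
          L * fnorm (H₁ - H₂) :=
  stmt8_general P lam α β γ Sig projβ hP hα hβ hγ hSig hprojβ
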